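/- Let G be a strongly topologically orderable gyrogroup. Then there is a totally ordered (by inclusion) local base 𝒱 at the identity consisting of symmetric neighborhoods W (i.e., ⊖W = W) such that gyr[x,y](W) = W for all x, y ∈ G and W ∈ 𝒱. -/

import Mathlib

open Set Topology

universe u

class Gyrogroup (G : Type u) where
  op : G → G → G
  one : G
  inv : G → G
  gyr : G → G → G ≃ G
  one_op : ∀ g, op one g = g
  op_one : ∀ g, op g one = g
  inv_op : ∀ g, op (inv g) g = one
  op_inv : ∀ g, op g (inv g) = one
  unique_one : ∀ e : G, (∀ g, op e g = g ∧ op g e = g) → e = one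
  unique_inv : ∀ g h : G, (op h g = one ∧ op g h = one) → h = inv g
  gyr_op : ∀ g h f, op g (op h f) = op (op g h) (gyr g h f)
  gyr_hom : ∀ g h a b, gyr g h (op a b) = op (gyr g h a) (gyr g h b)
  loop : ∀ g h, gyr g h = gyr (op g h) h

namespace Gyrogroup

variable {G : Type u} [Gyrogroup G]

/-- `H` is a subgyrogroup: nonempty and a gyrogroup under the restricted operations. -/
def IsSubgyrogroup (H : Set G) : Prop :=
  H.Nonempty ∧ one ∈ H ∧
  (∀ a ∈ H, ∀ b ∈ H, op a b ∈ H) ∧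
  (∀ a ∈ H, inv a ∈ H) ∧
  (∀ a ∈ H, ∀ b ∈ H, Set.BijOn (gyr a b) H H)

/-- `H` is an L-subgyrogroup: `gyr g h` fixes `H` setwise for every `g ∈ G`, `h ∈ H`. -/
def IsLSubgyrogroup (H : Set G) : Prop :=
  IsSubgyrogroup H ∧ ∀ g : G, ∀ h ∈ H, (gyr g h) '' H = H

def leftCoset (a : G) (H : Set G) : Set G := (fun h => op a h) '' H

/-- The subgyrogroup generated by `S`. -/
def generatedSubgyrogroup (S : Set G) : Set G :=
  ⋂₀ {H : Set G | IsSubgyrogroup H ∧ S ⊆ H}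

/-- The gyrogroup operations are continuous (topological gyrogroup). -/
def ContinuousGyroOps (G : Type u) [Gyrogroup G] [TopologicalSpace G] : Prop :=
  Continuous (fun p : G × G => op p.1 p.2) ∧ Continuous (inv : G → G)

/-- The topology coincides with the order topology of some linear order. -/
def TopologicallyOrderable (G : Type u) [t : TopologicalSpace G] : Prop :=
  ∃ l : LinearOrder G, t = TopologicalSpace.generateFrom
      {s : Set G | ∃ a : G, s = {x | l.lt a x} ∨ s = {x | l.lt x a}}

/-- A strongly topological gyrogroup: a topological gyrogroup with a neighborhood base
at `1` whose members are invariant under all gyroautomorphisms. -/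
def StronglyTopologicalGyrogroup (G : Type u) [Gyrogroup G] [TopologicalSpace G] : Prop :=
  ContinuousGyroOps G ∧
  ∃ 𝒰 : Set (Set G), (∀ U ∈ 𝒰, U ∈ nhds (one : G)) ∧
    (∀ V ∈ nhds (one : G), ∃ U ∈ 𝒰, U ⊆ V) ∧
    (∀ U ∈ 𝒰, ∀ x y : G, (gyr x y) '' U = U)

def StronglyTopologicallyOrderable (G : Type u) [Gyrogroup G] [TopologicalSpace G] : Prop :=
  StronglyTopologicalGyrogroup G ∧ TopologicallyOrderable G

end Gyrogroup

open Gyrogroup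

/-!
In the order topology, `𝓝 1 = 𝓝[≤] 1 ⊔ 𝓝[≥] 1`, and a side that is not isolated is generated by
the intervals `(a, 1]`, resp. `[1, b)`. Intersecting initial segments of a minimal cofinal family
gives it an antitone basis indexed by the initial ordinal of the cofinality of that side.
Separate continuity of `⊕` at `1` yields `p b < 1 < q a` with `a ⊕ b > 1` for `a ∈ (p b, 1]` and
`a ⊕ b < 1` for `b ∈ [1, q a)`; so `p b < a` forces `q a ≤ b`, which makes the two cofinalities
equal. The two antitone bases then share their index, and their unions form a chain basis of
`𝓝 1`. Finally each member is shrunk to its largest symmetric gyr-invariant subset: these sets are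
closed under unions, and by strong topologicity each of them is still a neighbourhood of `1`.
-/

open Filter Cardinal Order

section Cofinality

variable {α β : Type u}

theorem cof_le_cof_of_lt_imp_le [Preorder α] [Preorder β] [NoMaxOrder α] {p : β → α}
    {q : α → β} (h : ∀ a b, p b < a → b ≤ q a) : cof β ≤ cof α := by
  obtain ⟨S, hS, hSκ⟩ := exists_cof_eq α
  have hqS : IsCofinal (q '' S) := fun b => by
    obtain ⟨a, ha⟩ := exists_gt (p b)
    obtain ⟨s, hs, has⟩ := hS a
    exact ⟨q s, mem_image_of_mem q hs, h s b (ha.trans_le has)⟩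
  calc cof β ≤ #(q '' S) := cof_le hqS
    _ ≤ #S := mk_image_le
    _ = cof α := hSκ

theorem cof_eq_of_lt_imp_le [LinearOrder α] [LinearOrder β] [NoMaxOrder α] [NoMaxOrder β]
    {p : β → α} {q : α → β} (h : ∀ a b, p b < a → b ≤ q a) : cof α = cof β :=
  le_antisymm
    (cof_le_cof_of_lt_imp_le fun b a hqa => not_lt.1 fun hpb => (h a b hpb).not_gt hqa)
    (cof_le_cof_of_lt_imp_le h)

end Cofinality

namespace Filter

variable {X ι : Type*}

theorem HasAntitoneBasis.sup [Preorder ι] [IsDirectedOrder ι] {l₁ l₂ : Filter X}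
    {s t : ι → Set X} (hs : l₁.HasAntitoneBasis s) (ht : l₂.HasAntitoneBasis t) :
    (l₁ ⊔ l₂).HasAntitoneBasis fun i => s i ∪ t i := by
  refine ⟨⟨fun u => ?_⟩, fun i j hij => union_subset_union (hs.antitone hij) (ht.antitone hij)⟩
  simp only [mem_sup, hs.mem_iff, ht.mem_iff, union_subset_iff, true_and]
  constructor
  · rintro ⟨⟨i, hi⟩, j, hj⟩
    obtain ⟨k, hik, hjk⟩ := directed_of (· ≤ ·) i j
    exact ⟨k, (hs.antitone hik).trans hi, (ht.antitone hjk).trans hj⟩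
  · rintro ⟨k, hs, ht⟩
    exact ⟨⟨k, hs⟩, k, ht⟩

theorem hasAntitoneBasis_pure [Preorder ι] [Nonempty ι] (x : X) :
    (pure x : Filter X).HasAntitoneBasis fun _ : ι => {x} :=
  ⟨(hasBasis_pure x).comp_surjective (g := fun _ : ι => ()) fun _ => ⟨Classical.arbitrary ι, rfl⟩,
    antitone_const⟩

theorem HasAntitoneBasis.exists_reindex_cof {α : Type*} [LinearOrder α] {l : Filter X}
    {s : α → Set X} (hs : l.HasAntitoneBasis s) :
    ∃ t : (cof α).ord.ToType → Set X, l.HasAntitoneBasis t := by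
  obtain ⟨S, hS, hSκ⟩ := exists_cof_eq α
  obtain ⟨e⟩ : Nonempty ((cof α).ord.ToType ≃ S) := Cardinal.eq.1 (by rw [mk_ord_toType, hSκ])
  refine ⟨fun i => ⋂ j ≤ i, s (e j), ⟨fun u => ⟨fun hu => ?_, ?_⟩⟩,
    fun i i' hii' => iInter₂_mono' fun j hj => ⟨j, hj.trans hii', subset_rfl⟩⟩
  · obtain ⟨a, hau⟩ := hs.mem_iff.1 hu
    obtain ⟨b, hb, hab⟩ := hS a
    refine ⟨e.symm ⟨b, hb⟩, trivial, fun x hx => hau (hs.antitone hab ?_)⟩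
    simpa using mem_iInter₂.1 hx (e.symm ⟨b, hb⟩) le_rfl
  · rintro ⟨i, -, hiu⟩
    refine mem_of_superset ?_ hiu
    have hIio : #(Iio i) < cof α := by
      have := mk_Iio_lt i (by rw [mk_ord_toType, Ordinal.type_toType])
      rwa [mk_ord_toType] at this
    have hsmall : ¬ IsCofinal (range fun j : Iio i => (e j : α)) := fun hcof =>
      (cof_le hcof).not_gt (mk_range_le.trans_lt hIio)
    obtain ⟨a, ha⟩ := not_isCofinal_iff.1 hsmall
    refine mem_of_superset (hs.mem (max a (e i))) fun x hx => mem_iInter₂.2 fun j hj => ?_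
    apply hs.antitone _ hx
    rcases hj.lt_or_eq with hj | rfl
    · exact (ha _ ⟨⟨j, hj⟩, rfl⟩).le.trans (le_max_left _ _)
    · exact le_max_right _ _

end Filter

section OrderTopology

variable {X : Type u} [LinearOrder X] [TopologicalSpace X] [OrderTopology X] {c : X}

theorem exists_lt_and_exists_between_of_nhdsLE_ne_pure (h : 𝓝[≤] c ≠ pure c) :
    (∃ a, a < c) ∧ ∀ a < c, ∃ b, a < b ∧ b < c := by
  have hc : {c} ∉ 𝓝[≤] c := fun hc =>
    h (le_antisymm (le_pure_iff.2 hc) (pure_le_nhdsWithin (mem_Iic.2 le_rfl)))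
  refine ⟨?_, fun a ha => ?_⟩
  · by_contra! hmin
    exact hc (mem_of_superset self_mem_nhdsWithin fun x hx => le_antisymm hx (hmin x))
  · by_contra! hgap
    exact hc (mem_of_superset (Ioc_mem_nhdsLE ha) fun x hx => le_antisymm hx.2 (hgap x hx.1))

theorem exists_gt_and_exists_between_of_nhdsGE_ne_pure (h : 𝓝[≥] c ≠ pure c) :
    (∃ b, c < b) ∧ ∀ b > c, ∃ a, c < a ∧ a < b :=
  have h' :=
    exists_lt_and_exists_between_of_nhdsLE_ne_pure (X := Xᵒᵈ) (c := OrderDual.toDual c) h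
  ⟨h'.1, fun b hb => (h'.2 b hb).imp fun _ => And.symm⟩

theorem hasAntitoneBasis_nhdsLE (h : ∃ a, a < c) :
    (𝓝[≤] c).HasAntitoneBasis fun a : Iio c => Ioc (a : X) c :=
  ⟨⟨fun t => by simp [(nhdsLE_basis_of_exists_lt h).mem_iff]⟩,
    fun _ _ hab => Ioc_subset_Ioc_left hab⟩

theorem hasAntitoneBasis_nhdsGE (h : ∃ b, c < b) :
    (𝓝[≥] c).HasAntitoneBasis fun b : (Ioi c)ᵒᵈ => Ico c ((OrderDual.ofDual b : Ioi c) : X) :=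
  ⟨⟨fun t => by simp [(nhdsGE_basis_of_exists_gt h).mem_iff, OrderDual.exists]⟩,
    fun _ _ hab => Ico_subset_Ico_right hab⟩

theorem exists_chain_basis_nhds
    (h : 𝓝[≤] c = pure c ∨ 𝓝[≥] c = pure c ∨ cof (Iio c) = cof (Ioi c)ᵒᵈ) :
    ∃ 𝒱 : Set (Set X), (𝓝 c).HasBasis (· ∈ 𝒱) id ∧ IsChain (· ⊆ ·) 𝒱 := by
  suffices ∃ (ι : Type u) (_ : LinearOrder ι) (s : ι → Set X),
      (𝓝[≤] c ⊔ 𝓝[≥] c).HasAntitoneBasis s by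
    obtain ⟨ι, _, s, hs⟩ := this
    rw [nhdsLE_sup_nhdsGE] at hs
    exact ⟨range s, by simpa using hs.to_image_id, hs.antitone.isChain_range⟩
  by_cases hL : 𝓝[≤] c = pure c <;> by_cases hR : 𝓝[≥] c = pure c
  · refine ⟨PUnit, inferInstance, fun _ => {c}, ?_⟩
    rw [hL, hR, sup_idem]
    exact hasAntitoneBasis_pure c
  · obtain ⟨b, hb⟩ := (exists_gt_and_exists_between_of_nhdsGE_ne_pure hR).1
    have : Nonempty (Ioi c)ᵒᵈ := ⟨⟨b, hb⟩⟩
    exact ⟨_, inferInstance, _,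
      hL ▸ (hasAntitoneBasis_pure c).sup (hasAntitoneBasis_nhdsGE ⟨b, hb⟩)⟩
  · obtain ⟨a, ha⟩ := (exists_lt_and_exists_between_of_nhdsLE_ne_pure hL).1
    have : Nonempty (Iio c) := ⟨⟨a, ha⟩⟩
    exact ⟨_, inferInstance, _,
      hR ▸ (hasAntitoneBasis_nhdsLE ⟨a, ha⟩).sup (hasAntitoneBasis_pure c)⟩
  · obtain ⟨s, hs⟩ := (hasAntitoneBasis_nhdsLE
      (exists_lt_and_exists_between_of_nhdsLE_ne_pure hL).1).exists_reindex_cof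
    obtain ⟨t, ht⟩ : ∃ t : (cof (Iio c)).ord.ToType → Set X, (𝓝[≥] c).HasAntitoneBasis t := by
      rw [(h.resolve_left hL).resolve_left hR]
      exact (hasAntitoneBasis_nhdsGE
        (exists_gt_and_exists_between_of_nhdsGE_ne_pure hR).1).exists_reindex_cof
    exact ⟨_, inferInstance, _, hs.sup ht⟩

theorem nhdsLE_eq_pure_or_nhdsGE_eq_pure_or_cof_eq {m : X → X → X}
    (hm_left : ∀ x, m c x = x) (hm_right : ∀ x, m x c = x)
    (hcont_left : ∀ a, ContinuousAt (m a) c) (hcont_right : ∀ b, ContinuousAt (m · b) c) :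
    𝓝[≤] c = pure c ∨ 𝓝[≥] c = pure c ∨ cof (Iio c) = cof (Ioi c)ᵒᵈ := by
  refine or_iff_not_imp_left.2 fun hL => or_iff_not_imp_left.2 fun hR => ?_
  obtain ⟨⟨a₀, ha₀⟩, hLgap⟩ := exists_lt_and_exists_between_of_nhdsLE_ne_pure hL
  obtain ⟨⟨b₀, hb₀⟩, hRgap⟩ := exists_gt_and_exists_between_of_nhdsGE_ne_pure hR
  have : NoMaxOrder (Iio c) := ⟨fun a => by
    obtain ⟨b, hab, hbc⟩ := hLgap a a.2
    exact ⟨⟨b, hbc⟩, hab⟩⟩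
  have : NoMaxOrder (Ioi c)ᵒᵈ := ⟨fun b => by
    obtain ⟨a, hca, hab⟩ := hRgap _ (OrderDual.ofDual b).2
    exact ⟨OrderDual.toDual ⟨a, hca⟩, hab⟩⟩
  have hp : ∀ b : Ioi c, ∃ p : Iio c, ∀ a, (p : X) < a → a ≤ c → c < m a b := fun b => by
    have hmem : (m · b) ⁻¹' Ioi c ∈ 𝓝 c :=
      hcont_right _ (by simpa only [hm_left] using Ioi_mem_nhds b.2)
    obtain ⟨p, hp, hpe⟩ := exists_Ioc_subset_of_mem_nhds hmem ⟨a₀, ha₀⟩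
    exact ⟨⟨p, hp⟩, fun a hpa hae => hpe ⟨hpa, hae⟩⟩
  have hq : ∀ a : Iio c, ∃ q : Ioi c, ∀ b, c ≤ b → b < q → m a b < c := fun a => by
    have hmem : m a ⁻¹' Iio c ∈ 𝓝 c :=
      hcont_left _ (by simpa only [hm_right] using Iio_mem_nhds a.2)
    obtain ⟨q, hq, hqe⟩ := exists_Ico_subset_of_mem_nhds hmem ⟨b₀, hb₀⟩
    exact ⟨⟨q, hq⟩, fun b heb hbq => hqe ⟨heb, hbq⟩⟩
  choose p hp using hp
  choose q hq using hq
  -- `m a b` would be both `> c` and `< c` if `p b < a < c < b < q a`.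
  refine cof_eq_of_lt_imp_le (p := p ∘ OrderDual.ofDual) (q := OrderDual.toDual ∘ q)
    fun a b hpa => not_lt.1 fun hbq => ?_
  exact (hp _ a hpa a.2.le).not_gt (hq a _ (OrderDual.ofDual b).2.le hbq)

end OrderTopology

theorem exists_chain_basis_of_sUnion_closed {X : Type*} {l : Filter X} {P : Set X → Prop}
    (hP : ∀ S : Set (Set X), (∀ W ∈ S, P W) → P (⋃₀ S)) (hl : ∀ V ∈ l, ∃ W ∈ l, P W ∧ W ⊆ V)
    {𝒱 : Set (Set X)} (h𝒱 : l.HasBasis (· ∈ 𝒱) id) (hc : IsChain (· ⊆ ·) 𝒱) :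
    ∃ 𝒲 : Set (Set X), l.HasBasis (· ∈ 𝒲) id ∧ IsChain (· ⊆ ·) 𝒲 ∧ ∀ W ∈ 𝒲, P W := by
  set core : Set X → Set X := fun V => ⋃₀ {W | P W ∧ W ⊆ V}
  have core_subset (V : Set X) : core V ⊆ V := sUnion_subset fun W hW => hW.2
  have core_mem {V : Set X} (hV : V ∈ l) : core V ∈ l := by
    obtain ⟨W, hWl, hW, hWV⟩ := hl V hV
    exact mem_of_superset hWl (subset_sUnion_of_mem ⟨hW, hWV⟩)
  have core_mono {V V' : Set X} (hVV' : V ⊆ V') : core V ⊆ core V' :=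
    sUnion_mono fun W (hW : P W ∧ W ⊆ V) => (⟨hW.1, hW.2.trans hVV'⟩ : P W ∧ W ⊆ V')
  refine ⟨core '' 𝒱, hasBasis_iff.2 fun t => ?_,
    hc.image_of_map_rel _ _ core fun _ _ => core_mono,
    forall_mem_image.2 fun V _ => hP _ fun W hW => hW.1⟩
  simp only [mem_image, id, exists_exists_and_eq_and]
  constructor
  · intro ht
    obtain ⟨V, hV, hVt⟩ := h𝒱.mem_iff.1 ht
    exact ⟨V, hV, (core_subset V).trans hVt⟩
  · rintro ⟨V, hV, hVt⟩
    exact mem_of_superset (core_mem (h𝒱.mem_of_mem hV)) hVt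

theorem image_sUnion_of_forall_image_eq {X : Type*} {f : X → X} {S : Set (Set X)}
    (h : ∀ W ∈ S, f '' W = W) : f '' ⋃₀ S = ⋃₀ S := by
  rw [sUnion_eq_biUnion, image_iUnion₂]
  exact iUnion₂_congr h

namespace Gyrogroup

variable {G : Type u} [Gyrogroup G]

theorem inv_op_op (a x : G) : op (inv a) (op a x) = gyr (inv a) a x := by
  rw [gyr_op, inv_op, one_op]

theorem op_left_cancel (a : G) {x y : G} (h : op a x = op a y) : x = y :=
  (gyr (inv a) a).injective (by rw [← inv_op_op, ← inv_op_op, h])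

theorem gyr_one (x y : G) : gyr x y one = one :=
  op_left_cancel (gyr x y one) (by rw [op_one, ← gyr_hom, one_op])

theorem inv_one : inv (one : G) = one :=
  (unique_inv one one ⟨one_op one, one_op one⟩).symm

theorem inv_involutive : Function.Involutive (inv : G → G) := fun a =>
  (unique_inv (inv a) a ⟨op_inv a, inv_op a⟩).symm

theorem gyr_inv (x y a : G) : gyr x y (inv a) = inv (gyr x y a) :=
  unique_inv _ _ ⟨by rw [← gyr_hom, inv_op, gyr_one], by rw [← gyr_hom, op_inv, gyr_one]⟩

def IsSymmGyrInvariant (W : Set G) : Prop :=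
  (inv : G → G) '' W = W ∧ ∀ x y : G, gyr x y '' W = W

theorem isSymmGyrInvariant_sUnion {S : Set (Set G)} (hS : ∀ W ∈ S, IsSymmGyrInvariant W) :
    IsSymmGyrInvariant (⋃₀ S) :=
  ⟨image_sUnion_of_forall_image_eq fun W hW => (hS W hW).1,
    fun x y => image_sUnion_of_forall_image_eq fun W hW => (hS W hW).2 x y⟩

theorem StronglyTopologicalGyrogroup.exists_isSymmGyrInvariant_subset [TopologicalSpace G]
    (h : StronglyTopologicalGyrogroup G) {V : Set G} (hV : V ∈ 𝓝 one) :
    ∃ W ∈ 𝓝 one, IsSymmGyrInvariant W ∧ W ⊆ V := by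
  obtain ⟨⟨-, hinv⟩, 𝒰, h𝒰, hbase, hgyr⟩ := h
  obtain ⟨U, hU, hUV⟩ := hbase V hV
  have hinvU : inv '' U ∈ 𝓝 one := by
    rw [inv_involutive.image_eq_preimage_symm]
    exact hinv.continuousAt.preimage_mem_nhds (by rw [inv_one]; exact h𝒰 U hU)
  refine ⟨U ∩ inv '' U, inter_mem (h𝒰 U hU) hinvU, ⟨?_, fun x y => ?_⟩,
    inter_subset_left.trans hUV⟩
  · rw [image_inter inv_involutive.injective, image_image]
    simp only [inv_involutive _, image_id']
    exact inter_comm _ _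
  · rw [image_inter (gyr x y).injective, image_comm (gyr_inv x y), hgyr U hU x y]

end Gyrogroup

/-- A strongly topologically orderable gyrogroup has a totally ordered local base at
the identity consisting of symmetric, gyr-invariant neighborhoods. -/
theorem stmt8 {G : Type u} [Gyrogroup G] [TopologicalSpace G]
    (h : StronglyTopologicallyOrderable G) :
    ∃ 𝒱 : Set (Set G), (∀ W ∈ 𝒱, W ∈ nhds (one : G)) ∧
      (∀ V ∈ nhds (one : G), ∃ W ∈ 𝒱, W ⊆ V) ∧
      (∀ W ∈ 𝒱, ∀ W' ∈ 𝒱, W ⊆ W' ∨ W' ⊆ W) ∧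
      (∀ W ∈ 𝒱, (inv : G → G) '' W = W) ∧
      (∀ W ∈ 𝒱, ∀ x y : G, (gyr x y) '' W = W) := by
  obtain ⟨hG, l, htop⟩ := h
  have : OrderTopology G := ⟨htop⟩
  have hop : Continuous fun p : G × G => op p.1 p.2 := hG.1.1
  obtain ⟨𝒱, h𝒱, hchain⟩ := exists_chain_basis_nhds <|
    nhdsLE_eq_pure_or_nhdsGE_eq_pure_or_cof_eq one_op op_one
      (fun _ => (hop.comp (continuous_const.prodMk continuous_id)).continuousAt)
      (fun _ => (hop.comp (continuous_id.prodMk continuous_const)).continuousAt)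
  obtain ⟨𝒲, h𝒲, hchain', hsymm⟩ := exists_chain_basis_of_sUnion_closed
    (fun _ => isSymmGyrInvariant_sUnion) (fun _ => hG.exists_isSymmGyrInvariant_subset) h𝒱 hchain
  exact ⟨𝒲, fun W hW => h𝒲.mem_of_mem hW, fun V hV => h𝒲.mem_iff.1 hV,
    fun W hW W' hW' => hchain'.total hW hW', fun W hW => (hsymm W hW).1,
    fun W hW => (hsymm W hW).2⟩
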